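/- arXiv:2604.17444 — 3 statements merged into one kernel-verified Lean document; each statement's English description precedes it below -/
import Mathlib

section
/- Let M₁ and M₂ be block lower-triangular Toeplitz matrices of size s×(s+n) blocks with block entries M^i_k = F_i A_{F_i}^{k-1} B for k > 0, M^i_0 = I, M^i_k = 0 for k < 0 (i = 1, 2), where A_{F_i} = A + B F_i. Let V be the (s+n)×(s+n)-block lower-triangular Toeplitz matrix with V_k = (F₁ - F₂) A_{F₁}^{k-1} B for k > 0, V_0 = I, V_k = 0 for k < 0. Then M₂ V = M₁. -/
/-! Block `(l, m)` of `M₂ V` is `∑ⱼ M²_{n+l-j} V_{j-m}`. Both block sequences vanish at negative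
indices, so this is the causal convolution `∑_{i+j=k} M²_i V_j` with `k = n + l - m` (and zero
when `k < 0`). Splitting off `i = 0`, the convolution at `k + 1` is `V_{k+1} + F₂ xₖ` with
`xₖ = ∑_{i+j=k} A_{F₂}^i B V_j`. Since `B (F₁ - F₂) = A_{F₁} - A_{F₂}`, the state obeys
`x_{k+1} = A_{F₂} xₖ + (A_{F₁} - A_{F₂}) A_{F₁}^k B`, hence `xₖ = A_{F₁}^k B`, and
`V_{k+1} + F₂ xₖ = F₁ A_{F₁}^k B = M¹_{k+1}`. -/

open Matrix

/-- Block entry `M_k = F A_F^{k-1} B` for `k > 0`, `I` for `k = 0`, `0` for `k < 0`. -/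
noncomputable def Mblk {n p : ℕ} (A : Matrix (Fin n) (Fin n) ℝ)
    (B : Matrix (Fin n) (Fin p) ℝ) (F : Matrix (Fin p) (Fin n) ℝ) (k : ℤ) :
    Matrix (Fin p) (Fin p) ℝ :=
  if 0 < k then F * (A + B * F) ^ (k - 1).toNat * B else if k = 0 then 1 else 0

/-- Block entry `V_k = (F₁ - F₂) A_{F₁}^{k-1} B` for `k > 0`, `I` for `k = 0`, `0` for `k < 0`. -/
noncomputable def Vblk {n p : ℕ} (A : Matrix (Fin n) (Fin n) ℝ)
    (B : Matrix (Fin n) (Fin p) ℝ) (F₁ F₂ : Matrix (Fin p) (Fin n) ℝ) (k : ℤ) :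
    Matrix (Fin p) (Fin p) ℝ :=
  if 0 < k then (F₁ - F₂) * (A + B * F₁) ^ (k - 1).toNat * B else if k = 0 then 1 else 0

/-- The `s × (s+n)`-block Toeplitz matrix with `(l,j)`-th block `M_{n+l-j}`. -/
noncomputable def MToeplitz {n p : ℕ} (s : ℕ) (A : Matrix (Fin n) (Fin n) ℝ)
    (B : Matrix (Fin n) (Fin p) ℝ) (F : Matrix (Fin p) (Fin n) ℝ) :
    Matrix (Fin s × Fin p) (Fin (s + n) × Fin p) ℝ :=
  fun lq jb => Mblk A B F ((n : ℤ) + (lq.1 : ℤ) - (jb.1 : ℤ)) lq.2 jb.2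

/-- The `(s+n) × (s+n)`-block Toeplitz matrix with `(i,j)`-th block `V_{i-j}`. -/
noncomputable def VToeplitz {n p : ℕ} (s : ℕ) (A : Matrix (Fin n) (Fin n) ℝ)
    (B : Matrix (Fin n) (Fin p) ℝ) (F₁ F₂ : Matrix (Fin p) (Fin n) ℝ) :
    Matrix (Fin (s + n) × Fin p) (Fin (s + n) × Fin p) ℝ :=
  fun ia jb => Vblk A B F₁ F₂ ((ia.1 : ℤ) - (jb.1 : ℤ)) ia.2 jb.2

theorem Matrix.comp_mul_comp {I J K L R : Type*} [Fintype J] [Fintype L]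
    [NonUnitalNonAssocSemiring R] (M : Matrix I J (Matrix L L R)) (N : Matrix J K (Matrix L L R)) :
    comp I J L L R M * comp J K L L R N = comp I K L L R (M * N) := by
  ext ⟨i, k⟩ ⟨j, l⟩
  simp only [comp_apply, mul_apply, Fintype.sum_prod_type, sum_apply]

section CausalConvolution

open Finset

variable {R : Type*} [NonUnitalNonAssocSemiring R] {f g : ℤ → R}

theorem Fin.sum_mul_eq_sum_antidiagonal (hf : ∀ k < 0, f k = 0) (hg : ∀ k < 0, g k = 0)
    {K a b : ℕ} (hab : a ≤ b) (hbK : b < K) :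
    ∑ j : Fin K, f (b - j) * g (j - a) = ∑ q ∈ antidiagonal (b - a), f q.1 * g q.2 := by
  rw [Fin.sum_univ_eq_sum_range (fun j => f (b - j) * g (j - a))]
  symm
  refine sum_of_injOn (fun q => a + q.2) ?_ ?_ ?_ ?_
  · intro q hq q' hq' h
    simp only [mem_coe, HasAntidiagonal.mem_antidiagonal] at hq hq'
    simp only at h
    ext <;> omega
  · intro q hq
    simp only [mem_coe, HasAntidiagonal.mem_antidiagonal] at hq
    simp only [coe_range, Set.mem_Iio]
    omega
  · intro j _ hj
    rcases lt_or_ge j a with hja | haj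
    · rw [hg _ (by omega), mul_zero]
    rcases lt_or_ge b j with hbj | hjb
    · rw [hf _ (by omega), zero_mul]
    refine absurd ⟨(b - j, j - a), ?_, ?_⟩ hj
    · simp only [mem_coe, HasAntidiagonal.mem_antidiagonal]
      omega
    · dsimp only
      omega
  · intro q hq
    rw [HasAntidiagonal.mem_antidiagonal] at hq
    congr 2 <;> push_cast <;> omega

theorem Fin.sum_mul_eq_zero_of_lt (hf : ∀ k < 0, f k = 0) (hg : ∀ k < 0, g k = 0)
    {K a b : ℕ} (hba : b < a) : ∑ j : Fin K, f (b - j) * g (j - a) = 0 := by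
  refine sum_eq_zero fun j _ => ?_
  rcases lt_or_ge b j with hbj | hjb
  · rw [hf _ (by omega), zero_mul]
  · rw [hg _ (by omega), mul_zero]

end CausalConvolution

section Blocks

variable {n p : ℕ} (A : Matrix (Fin n) (Fin n) ℝ) (B : Matrix (Fin n) (Fin p) ℝ)
  (F F₁ F₂ : Matrix (Fin p) (Fin n) ℝ)

@[simp]
theorem Mblk_zero : Mblk A B F 0 = 1 := by
  simp [Mblk]

@[simp]
theorem Mblk_natCast_add_one (k : ℕ) : Mblk A B F (k + 1) = F * (A + B * F) ^ k * B := by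
  simp [Mblk]

theorem Mblk_of_neg {k : ℤ} (hk : k < 0) : Mblk A B F k = 0 := by
  simp [Mblk, hk.not_gt, hk.ne]

@[simp]
theorem Vblk_zero : Vblk A B F₁ F₂ 0 = 1 := by
  simp [Vblk]

@[simp]
theorem Vblk_natCast_add_one (k : ℕ) :
    Vblk A B F₁ F₂ (k + 1) = (F₁ - F₂) * (A + B * F₁) ^ k * B := by
  simp [Vblk]

theorem Vblk_of_neg {k : ℤ} (hk : k < 0) : Vblk A B F₁ F₂ k = 0 := by
  simp [Vblk, hk.not_gt, hk.ne]

open Finset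

theorem sum_antidiagonal_pow_mul_mul_Vblk (k : ℕ) :
    ∑ q ∈ antidiagonal k, (A + B * F₂) ^ q.1 * B * Vblk A B F₁ F₂ q.2 = (A + B * F₁) ^ k * B := by
  induction k with
  | zero => simp
  | succ k ih =>
    have hB : B * Vblk A B F₁ F₂ (k + 1) =
        ((A + B * F₁) - (A + B * F₂)) * (A + B * F₁) ^ k * B := by
      rw [Vblk_natCast_add_one, add_sub_add_left_eq_sub, ← Matrix.mul_sub, Matrix.mul_assoc,
        Matrix.mul_assoc, Matrix.mul_assoc]
    have hsum : ∑ q ∈ antidiagonal k, (A + B * F₂) ^ (q.1 + 1) * B * Vblk A B F₁ F₂ q.2 =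
        (A + B * F₂) * ((A + B * F₁) ^ k * B) := by
      rw [← ih, Matrix.mul_sum]
      simp only [pow_succ', Matrix.mul_assoc]
    rw [Nat.sum_antidiagonal_succ, hsum]
    push_cast
    rw [pow_zero, Matrix.one_mul, hB, Matrix.mul_assoc _ _ B, ← Matrix.add_mul, sub_add_cancel,
      ← Matrix.mul_assoc, ← pow_succ']

theorem sum_antidiagonal_Mblk_mul_Vblk (k : ℕ) :
    ∑ q ∈ antidiagonal k, Mblk A B F₂ q.1 * Vblk A B F₁ F₂ q.2 = Mblk A B F₁ k := by
  cases k with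
  | zero => simp
  | succ k =>
    rw [Nat.sum_antidiagonal_succ]
    push_cast
    simp only [Mblk_zero, Mblk_natCast_add_one, Vblk_natCast_add_one, Matrix.one_mul,
      Matrix.mul_assoc, ← Matrix.mul_sum]
    simp only [← Matrix.mul_assoc, sum_antidiagonal_pow_mul_mul_Vblk]
    rw [← Matrix.add_mul, ← Matrix.add_mul, sub_add_cancel]

theorem sum_fin_Mblk_mul_Vblk {K : ℕ} (a b : ℕ) (hbK : b < K) :
    ∑ j : Fin K, Mblk A B F₂ (b - j) * Vblk A B F₁ F₂ (j - a) = Mblk A B F₁ (b - a) := by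
  have hM : ∀ k < 0, Mblk A B F₂ k = 0 := fun _ => Mblk_of_neg A B F₂
  have hV : ∀ k < 0, Vblk A B F₁ F₂ k = 0 := fun _ => Vblk_of_neg A B F₁ F₂
  rcases le_or_gt a b with hab | hba
  · rw [Fin.sum_mul_eq_sum_antidiagonal hM hV hab hbK, sum_antidiagonal_Mblk_mul_Vblk,
      Nat.cast_sub hab]
  · rw [Fin.sum_mul_eq_zero_of_lt hM hV hba, Mblk_of_neg A B F₁ (by omega)]

theorem MToeplitz_eq_comp (s : ℕ) :
    MToeplitz s A B F = comp _ _ _ _ ℝ (of fun (l : Fin s) (j : Fin (s + n)) =>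
      Mblk A B F ((n : ℤ) + (l : ℤ) - (j : ℤ))) :=
  rfl

theorem VToeplitz_eq_comp (s : ℕ) :
    VToeplitz s A B F₁ F₂ = comp _ _ _ _ ℝ (of fun (i j : Fin (s + n)) =>
      Vblk A B F₁ F₂ ((i : ℤ) - (j : ℤ))) :=
  rfl

end Blocks

/-- `M₂ V = M₁`: the block Toeplitz matrix of the image representation for gain `F₂`,
right-multiplied by the Toeplitz matrix of `V`, yields the one for gain `F₁`. -/
theorem MToeplitz_mul_VToeplitz {n p : ℕ} (s : ℕ) (A : Matrix (Fin n) (Fin n) ℝ)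
    (B : Matrix (Fin n) (Fin p) ℝ) (F₁ F₂ : Matrix (Fin p) (Fin n) ℝ) :
    MToeplitz s A B F₂ * VToeplitz s A B F₁ F₂ = MToeplitz s A B F₁ := by
  rw [MToeplitz_eq_comp, MToeplitz_eq_comp, VToeplitz_eq_comp, comp_mul_comp]
  congr 1
  ext l m : 1
  simp only [mul_apply, of_apply]
  exact_mod_cast sum_fin_Mblk_mul_Vblk A B F₁ F₂ (K := s + n) m (n + l) (by omega)
end

section
/- Let U = [U₁, U₂] ∈ ℝ^{N×N} be orthogonal with U₁ ∈ ℝ^{N×γ}, and let P ∈ ℝ^{N×γ} have orthonormal columns. Then min over Q ∈ ℝ^{γ×γ} of ‖P − U₁ Q‖₂ equals ‖U₂ᵀ P‖₂, attained at Q = U₁ᵀ P. -/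
/-!
Since `U₂ᵀ U₁ = 0`, we have `U₂ᵀ (P - U₁ Q) = U₂ᵀ P` for every `Q`, and `U₂ᵀ` is a contraction, so
`‖U₂ᵀ P‖ ≤ ‖P - U₁ Q‖`. For `Q = U₁ᵀ P`, the identity `U₁ U₁ᵀ + U₂ U₂ᵀ = 1` gives
`P - U₁ U₁ᵀ P = U₂ (U₂ᵀ P)`, and `U₂` is a contraction too, so the bound is attained.
-/

open Matrix
open scoped Matrix.Norms.L2Operator

namespace Matrix

section L2OpNorm

variable {𝕜 l m n : Type*} [RCLike 𝕜] [Fintype l] [Fintype m] [Fintype n]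
  [DecidableEq l] [DecidableEq n]

lemma l2_opNorm_one_le : ‖(1 : Matrix n n 𝕜)‖ ≤ 1 := by
  rw [← l2_opNorm_toEuclideanCLM, map_one]
  exact ContinuousLinearMap.norm_id_le

lemma l2_opNorm_le_one_of_conjTranspose_mul_self_eq_one {A : Matrix m n 𝕜}
    (hA : Aᴴ * A = 1) : ‖A‖ ≤ 1 := by
  have h : ‖A‖ * ‖A‖ ≤ 1 := by
    rw [← l2_opNorm_conjTranspose_mul_self, hA]
    exact l2_opNorm_one_le
  nlinarith [norm_nonneg A]

lemma l2_opNorm_mul_le_of_l2_opNorm_le_one {A : Matrix m n 𝕜} (hA : ‖A‖ ≤ 1)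
    (B : Matrix n l 𝕜) : ‖A * B‖ ≤ ‖B‖ :=
  (l2_opNorm_mul A B).trans (mul_le_of_le_one_left (norm_nonneg B) hA)

end L2OpNorm

lemma transpose_fromCols_mul_fromCols_eq_one_iff {R m n₁ n₂ : Type*} [Semiring R] [Fintype m]
    [DecidableEq n₁] [DecidableEq n₂] (A₁ : Matrix m n₁ R) (A₂ : Matrix m n₂ R) :
    (fromCols A₁ A₂)ᵀ * fromCols A₁ A₂ = 1 ↔
      A₁ᵀ * A₁ = 1 ∧ A₁ᵀ * A₂ = 0 ∧ A₂ᵀ * A₁ = 0 ∧ A₂ᵀ * A₂ = 1 := by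
  rw [transpose_fromCols, fromRows_mul_fromCols, ← fromBlocks_one, fromBlocks_inj]

end Matrix

theorem min_dist_to_column_space_general {N γ : ℕ}
    (U₁ : Matrix (Fin N) (Fin γ) ℝ) (U₂ : Matrix (Fin N) (Fin (N - γ)) ℝ)
    (hUl : (Matrix.fromCols U₁ U₂)ᵀ * Matrix.fromCols U₁ U₂ = 1)
    (hUr : Matrix.fromCols U₁ U₂ * (Matrix.fromCols U₁ U₂)ᵀ = 1)
    (P : Matrix (Fin N) (Fin γ) ℝ) :
    IsLeast {x : ℝ | ∃ Q : Matrix (Fin γ) (Fin γ) ℝ, x = ‖P - U₁ * Q‖} ‖U₂ᵀ * P‖ ∧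
      ‖P - U₁ * (U₁ᵀ * P)‖ = ‖U₂ᵀ * P‖ := by
  obtain ⟨-, -, hU₂U₁, hU₂U₂⟩ := (transpose_fromCols_mul_fromCols_eq_one_iff U₁ U₂).mp hUl
  have hU₂ : ‖U₂‖ ≤ 1 := l2_opNorm_le_one_of_conjTranspose_mul_self_eq_one hU₂U₂
  have hU₂t : ‖U₂ᵀ‖ ≤ 1 := by
    rwa [← conjTranspose_eq_transpose_of_trivial, l2_opNorm_conjTranspose]
  have lower (Q : Matrix (Fin γ) (Fin γ) ℝ) : ‖U₂ᵀ * P‖ ≤ ‖P - U₁ * Q‖ :=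
    calc ‖U₂ᵀ * P‖ = ‖U₂ᵀ * (P - U₁ * Q)‖ := by
          rw [Matrix.mul_sub, ← Matrix.mul_assoc, hU₂U₁, Matrix.zero_mul, sub_zero]
      _ ≤ ‖P - U₁ * Q‖ := l2_opNorm_mul_le_of_l2_opNorm_le_one hU₂t _
  have attained : ‖P - U₁ * (U₁ᵀ * P)‖ = ‖U₂ᵀ * P‖ := by
    have hsplit : P - U₁ * (U₁ᵀ * P) = U₂ * (U₂ᵀ * P) := by
      rw [transpose_fromCols, fromCols_mul_fromRows] at hUr
      rw [sub_eq_iff_eq_add', ← Matrix.mul_assoc, ← Matrix.mul_assoc, ← Matrix.add_mul, hUr,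
        Matrix.one_mul]
    refine le_antisymm ?_ (lower _)
    rw [hsplit]
    exact l2_opNorm_mul_le_of_l2_opNorm_le_one hU₂ _
  refine ⟨⟨⟨_, attained.symm⟩, ?_⟩, attained⟩
  rintro _ ⟨Q, rfl⟩
  exact lower Q

/-- For an orthogonal `U = [U₁, U₂]` and `P` with orthonormal columns,
`min_Q ‖P − U₁ Q‖₂ = ‖U₂ᵀ P‖₂`, attained at `Q = U₁ᵀ P`. -/
theorem min_dist_to_column_space {N γ : ℕ} (hγ : γ ≤ N)
    (U₁ : Matrix (Fin N) (Fin γ) ℝ) (U₂ : Matrix (Fin N) (Fin (N - γ)) ℝ)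
    (hUl : (Matrix.fromCols U₁ U₂)ᵀ * Matrix.fromCols U₁ U₂ = 1)
    (hUr : Matrix.fromCols U₁ U₂ * (Matrix.fromCols U₁ U₂)ᵀ = 1)
    (P : Matrix (Fin N) (Fin γ) ℝ) (hP : Pᵀ * P = 1) :
    IsLeast {x : ℝ | ∃ Q : Matrix (Fin γ) (Fin γ) ℝ, x = ‖P - U₁ * Q‖} ‖U₂ᵀ * P‖ ∧
      ‖P - U₁ * (U₁ᵀ * P)‖ = ‖U₂ᵀ * P‖ :=
  min_dist_to_column_space_general U₁ U₂ hUl hUr P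
end

section
/- Let S₁, S₂ ∈ ℝ^{N×N} be symmetric, S = S₁ + S₂, with S₁ positive semidefinite of rank γ. Let U₁ span the top-γ eigenspace of S and V₁ span the range of S₁ (column space, an invariant subspace of S₁ for its nonzero eigenvalues). If λ_γ(S₁) > 2‖S₂‖₂ then ‖V₁V₁ᵀ − U₁U₁ᵀ‖₂ ≤ ‖S₂‖₂ / (λ_γ(S₁) − 2‖S₂‖₂) (a Davis–Kahan-type bound on the projection difference). -/
open Matrix
open scoped Matrix.Norms.L2Operator

/-- `eigDesc v k` is the `k`-th largest entry of `v` (0-based). -/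
noncomputable def eigDesc {N : ℕ} (v : Fin N → ℝ) (k : Fin N) : ℝ :=
  (v ∘ Tuple.sort v) k.rev

/-!
Weyl's inequality, proved by the Courant–Fischer dimension count, puts the top `γ` eigenvalues
of `S = S₁ + S₂` above `λ_γ(S₁) - ‖S₂‖`. Write `P = V₁V₁ᵀ` and `Q = U₁U₁ᵀ`. Since the range of `P`
is that of `S₁`, `(1 - P) S₁ = 0`, and the eigen-equation `S U₁ = U₁ diag μ` turns into
`(1 - P) U₁ diag μ = (1 - P) S₂ U₁`; hence `‖(1 - P) U₁‖ ≤ ‖S₂‖ / (λ_γ(S₁) - ‖S₂‖) < 1`.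
Both projections have rank `γ`, so `V₁ᵀU₁` is square and a lower bound on it passes to its
transpose: the same bound holds for `‖(1 - Q) V₁‖`. Finally `P - Q = P (1 - Q) - (1 - P) Q` splits
into pieces with orthogonal ranges acting on orthogonal components, so `‖P - Q‖` is at most the
larger of the two norms.
-/

open scoped RealInnerProductSpace
open Finset Module Submodule

lemma eigDesc_antitone {N : ℕ} (v : Fin N → ℝ) : Antitone (eigDesc v) :=
  fun _ _ hk => Tuple.monotone_sort v (Fin.rev_le_rev.mpr hk)

lemma le_card_filter_eigDesc_le {N : ℕ} (v : Fin N → ℝ) (k : Fin N) :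
    k + 1 ≤ #{i | eigDesc v k ≤ v i} := by
  calc (k : ℕ) + 1 = #(Ici k.rev) := by simp only [Fin.card_Ici, Fin.val_rev]; omega
    _ ≤ _ := card_le_card_of_injOn (Tuple.sort v)
      (fun j hj => mem_filter.mpr ⟨mem_univ _, Tuple.monotone_sort v (mem_Ici.mp hj)⟩)
      (Tuple.sort v).injective.injOn

lemma sub_le_card_filter_le_eigDesc {N : ℕ} (v : Fin N → ℝ) (k : Fin N) :
    N - k ≤ #{i | v i ≤ eigDesc v k} := by
  calc N - (k : ℕ) = #(Iic k.rev) := by simp only [Fin.card_Iic, Fin.val_rev]; omega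
    _ ≤ _ := card_le_card_of_injOn (Tuple.sort v)
      (fun j hj => mem_filter.mpr ⟨mem_univ _, Tuple.monotone_sort v (mem_Iic.mp hj)⟩)
      (Tuple.sort v).injective.injOn

lemma Submodule.exists_mem_inf_ne_zero_of_finrank_lt {K V : Type*} [DivisionRing K]
    [AddCommGroup V] [Module K V] [FiniteDimensional K V] (s t : Submodule K V)
    (h : finrank K V < finrank K s + finrank K t) : ∃ x ∈ s ⊓ t, x ≠ 0 := by
  refine exists_mem_ne_zero_of_ne_bot fun hst => ?_
  have := finrank_add_finrank_le_of_disjoint (disjoint_iff.mpr hst)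
  omega

lemma LinearIndependent.finrank_span_image {K V ι : Type*} [DivisionRing K] [AddCommGroup V]
    [Module K V] {v : ι → V} (hv : LinearIndependent K v) (s : Finset ι) :
    finrank K (span K (v '' s)) = #s := by
  have := finrank_span_eq_card (hv.comp ((↑) : s → ι) Subtype.val_injective)
  rw [Set.image_eq_range, ← Fintype.card_coe]
  exact this

lemma OrthonormalBasis.inner_eq_zero_of_mem_span_image {ι 𝕜 E : Type*} [Fintype ι] [RCLike 𝕜]
    [NormedAddCommGroup E] [InnerProductSpace 𝕜 E] (b : OrthonormalBasis ι 𝕜 E) {s : Set ι}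
    {x : E} (hx : x ∈ span 𝕜 (b '' s)) {i : ι} (hi : i ∉ s) : inner 𝕜 (b i) x = 0 := by
  refine mem_orthogonal_singleton_iff_inner_right.mp ?_
  refine span_le.mpr ?_ hx
  rintro _ ⟨j, hj, rfl⟩
  exact mem_orthogonal_singleton_iff_inner_right.mpr
    (b.orthonormal.2 (ne_of_mem_of_not_mem hj hi).symm)

namespace Matrix.IsHermitian

variable {n : Type*} [Fintype n] [DecidableEq n] {A : Matrix n n ℝ}

lemma inner_toEuclideanCLM_self_eq_sum (hA : A.IsHermitian) (x : EuclideanSpace ℝ n) :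
    ⟪x, toEuclideanCLM (𝕜 := ℝ) A x⟫ = ∑ i, hA.eigenvalues i * ⟪hA.eigenvectorBasis i, x⟫ ^ 2 := by
  set b := hA.eigenvectorBasis
  have hsymm : (toEuclideanLin A).IsSymmetric := isSymmetric_toEuclideanLin_iff.mpr hA
  rw [← b.sum_inner_mul_inner]
  refine sum_congr rfl fun i _ => ?_
  have hb : toEuclideanCLM (𝕜 := ℝ) A (b i) = hA.eigenvalues i • b i := by
    apply WithLp.ofLp_injective
    simpa using hA.mulVec_eigenvectorBasis i
  have : ⟪b i, toEuclideanCLM (𝕜 := ℝ) A x⟫ = ⟪toEuclideanCLM (𝕜 := ℝ) A (b i), x⟫ :=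
    (hsymm _ _).symm
  rw [this, hb, real_inner_smul_left, real_inner_comm]
  ring

lemma mul_norm_sq_le_inner_of_mem_span (hA : A.IsHermitian) {s : Set n} {c : ℝ}
    (hc : ∀ i ∈ s, c ≤ hA.eigenvalues i) {x : EuclideanSpace ℝ n}
    (hx : x ∈ span ℝ (hA.eigenvectorBasis '' s)) :
    c * ‖x‖ ^ 2 ≤ ⟪x, toEuclideanCLM (𝕜 := ℝ) A x⟫ := by
  rw [hA.inner_toEuclideanCLM_self_eq_sum, ← hA.eigenvectorBasis.sum_sq_inner_right, mul_sum]
  refine sum_le_sum fun i _ => ?_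
  by_cases hi : i ∈ s
  · exact mul_le_mul_of_nonneg_right (hc i hi) (sq_nonneg _)
  · simp [hA.eigenvectorBasis.inner_eq_zero_of_mem_span_image hx hi]

lemma inner_le_mul_norm_sq_of_mem_span (hA : A.IsHermitian) {s : Set n} {c : ℝ}
    (hc : ∀ i ∈ s, hA.eigenvalues i ≤ c) {x : EuclideanSpace ℝ n}
    (hx : x ∈ span ℝ (hA.eigenvectorBasis '' s)) :
    ⟪x, toEuclideanCLM (𝕜 := ℝ) A x⟫ ≤ c * ‖x‖ ^ 2 := by
  rw [hA.inner_toEuclideanCLM_self_eq_sum, ← hA.eigenvectorBasis.sum_sq_inner_right, mul_sum]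
  refine sum_le_sum fun i _ => ?_
  by_cases hi : i ∈ s
  · exact mul_le_mul_of_nonneg_right (hc i hi) (sq_nonneg _)
  · simp [hA.eigenvectorBasis.inner_eq_zero_of_mem_span_image hx hi]

end Matrix.IsHermitian

theorem Matrix.IsHermitian.eigDesc_sub_norm_le {N : ℕ} {A E : Matrix (Fin N) (Fin N) ℝ}
    (hA : A.IsHermitian) (hAE : (A + E).IsHermitian) (k : Fin N) :
    eigDesc hA.eigenvalues k - ‖E‖ ≤ eigDesc hAE.eigenvalues k := by
  set top : Finset (Fin N) := {i | eigDesc hA.eigenvalues k ≤ hA.eigenvalues i}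
  set bot : Finset (Fin N) := {i | hAE.eigenvalues i ≤ eigDesc hAE.eigenvalues k}
  obtain ⟨x, ⟨hx_top, hx_bot⟩, hx0⟩ := exists_mem_inf_ne_zero_of_finrank_lt
    (span ℝ (hA.eigenvectorBasis '' top)) (span ℝ (hAE.eigenvectorBasis '' bot)) (by
      rw [hA.eigenvectorBasis.orthonormal.linearIndependent.finrank_span_image,
        hAE.eigenvectorBasis.orthonormal.linearIndependent.finrank_span_image,
        finrank_euclideanSpace_fin]
      have : k + 1 ≤ #top := le_card_filter_eigDesc_le hA.eigenvalues k
      have : N - k ≤ #bot := sub_le_card_filter_le_eigDesc hAE.eigenvalues k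
      omega)
  have h_top := hA.mul_norm_sq_le_inner_of_mem_span (fun i hi => (mem_filter.mp hi).2) hx_top
  have h_bot := hAE.inner_le_mul_norm_sq_of_mem_span (fun i hi => (mem_filter.mp hi).2) hx_bot
  have h_E : -(‖E‖ * ‖x‖ ^ 2) ≤ ⟪x, toEuclideanCLM (𝕜 := ℝ) E x⟫ := by
    refine neg_le_of_abs_le ?_
    calc |⟪x, toEuclideanCLM (𝕜 := ℝ) E x⟫| ≤ ‖x‖ * ‖toEuclideanCLM (𝕜 := ℝ) E x‖ :=
          abs_real_inner_le_norm _ _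
      _ ≤ ‖x‖ * (‖E‖ * ‖x‖) := by gcongr; exact (toEuclideanCLM (𝕜 := ℝ) E).le_opNorm x
      _ = ‖E‖ * ‖x‖ ^ 2 := by ring
  have h_add : ⟪x, toEuclideanCLM (𝕜 := ℝ) (A + E) x⟫ =
      ⟪x, toEuclideanCLM (𝕜 := ℝ) A x⟫ + ⟪x, toEuclideanCLM (𝕜 := ℝ) E x⟫ := by
    rw [map_add, _root_.add_apply, inner_add_right]
  have hx : 0 < ‖x‖ ^ 2 := by positivity
  nlinarith

namespace Matrix

variable {m n k : Type*} [Fintype m] [Fintype n] [Fintype k]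

lemma dotProduct_add_self_of_dotProduct_eq_zero {a b : n → ℝ} (h : a ⬝ᵥ b = 0) :
    (a + b) ⬝ᵥ (a + b) = a ⬝ᵥ a + b ⬝ᵥ b := by
  rw [add_dotProduct, dotProduct_add, dotProduct_add, dotProduct_comm b a, h]
  ring

lemma mulVec_dotProduct_mulVec_eq_zero {X Y : Matrix m n ℝ} (h : Xᵀ * Y = 0) (v w : n → ℝ) :
    X *ᵥ v ⬝ᵥ Y *ᵥ w = 0 := by
  have h' : Yᵀ * X = 0 := by
    rw [← transpose_transpose (Yᵀ * X), transpose_mul, transpose_transpose, h, transpose_zero]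
  rw [dotProduct_mulVec, ← mulVec_transpose, mulVec_mulVec, h', zero_mulVec, zero_dotProduct]

lemma _root_.EuclideanSpace.norm_toLp_sq (u : n → ℝ) : ‖WithLp.toLp 2 u‖ ^ 2 = u ⬝ᵥ u := by
  rw [← real_inner_self_eq_norm_sq, EuclideanSpace.inner_toLp_toLp, star_trivial]

lemma l2_opNorm_sq_le_iff [DecidableEq n] {A : Matrix m n ℝ} {c : ℝ} (hc : 0 ≤ c) :
    ‖A‖ ^ 2 ≤ c ↔ ∀ v, A *ᵥ v ⬝ᵥ A *ᵥ v ≤ c * (v ⬝ᵥ v) := by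
  simp_rw [← EuclideanSpace.norm_toLp_sq]
  constructor
  · intro h v
    calc ‖WithLp.toLp 2 (A *ᵥ v)‖ ^ 2 ≤ (‖A‖ * ‖WithLp.toLp 2 v‖) ^ 2 := by
          gcongr; exact A.l2_opNorm_mulVec (WithLp.toLp 2 v)
      _ ≤ c * ‖WithLp.toLp 2 v‖ ^ 2 := by rw [mul_pow]; gcongr
  · intro h
    rw [← Real.le_sqrt (norm_nonneg _) hc, l2_opNorm_def]
    refine ContinuousLinearMap.opNorm_le_bound _ (Real.sqrt_nonneg c) fun x => ?_
    rw [← sq_le_sq₀ (norm_nonneg _) (by positivity), mul_pow, Real.sq_sqrt hc]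
    exact h x.ofLp

lemma l2_opNorm_le_iff [DecidableEq n] {A : Matrix m n ℝ} {c : ℝ} (hc : 0 ≤ c) :
    ‖A‖ ≤ c ↔ ∀ v, A *ᵥ v ⬝ᵥ A *ᵥ v ≤ c ^ 2 * (v ⬝ᵥ v) := by
  rw [← l2_opNorm_sq_le_iff (sq_nonneg c), sq_le_sq₀ (norm_nonneg A) hc]

lemma mulVec_dotProduct_mulVec_self_of_transpose_mul_self [DecidableEq k] {V : Matrix n k ℝ}
    (hV : Vᵀ * V = 1) (c : k → ℝ) : V *ᵥ c ⬝ᵥ V *ᵥ c = c ⬝ᵥ c := by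
  rw [dotProduct_mulVec, ← mulVec_transpose, mulVec_mulVec, hV, one_mulVec]

lemma l2_opNorm_le_one_of_transpose_mul_self [DecidableEq k] {V : Matrix n k ℝ}
    (hV : Vᵀ * V = 1) : ‖V‖ ≤ 1 :=
  (l2_opNorm_le_iff zero_le_one).mpr fun c => by
    rw [mulVec_dotProduct_mulVec_self_of_transpose_mul_self hV, one_pow, one_mul]

lemma isStarProjection_mul_transpose [DecidableEq k] {V : Matrix n k ℝ} (hV : Vᵀ * V = 1) :
    IsStarProjection (V * Vᵀ) where
  isIdempotentElem := by
    rw [IsIdempotentElem, Matrix.mul_assoc, ← Matrix.mul_assoc Vᵀ, hV, Matrix.one_mul]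
  isSelfAdjoint := by
    rw [IsSelfAdjoint, star_eq_conjTranspose, conjTranspose_eq_transpose_of_trivial, transpose_mul,
      transpose_transpose]

lemma _root_.IsStarProjection.matrix_transpose_eq {P : Matrix n n ℝ} (hP : IsStarProjection P) :
    Pᵀ = P := by
  rw [← conjTranspose_eq_transpose_of_trivial]; exact hP.isSelfAdjoint

lemma _root_.IsStarProjection.mulVec_dotProduct_self_add_one_sub_mulVec [DecidableEq n]
    {P : Matrix n n ℝ} (hP : IsStarProjection P) (v : n → ℝ) :
    P *ᵥ v ⬝ᵥ P *ᵥ v + (1 - P) *ᵥ v ⬝ᵥ (1 - P) *ᵥ v = v ⬝ᵥ v := by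
  have horth : P *ᵥ v ⬝ᵥ (1 - P) *ᵥ v = 0 :=
    mulVec_dotProduct_mulVec_eq_zero (by rw [hP.matrix_transpose_eq, hP.mul_one_sub_self]) v v
  rw [← dotProduct_add_self_of_dotProduct_eq_zero horth, ← add_mulVec, add_sub_cancel,
    one_mulVec]

lemma mulVec_dotProduct_mulVec_self_le [DecidableEq n] (A : Matrix m n ℝ) (v : n → ℝ) :
    A *ᵥ v ⬝ᵥ A *ᵥ v ≤ ‖A‖ ^ 2 * (v ⬝ᵥ v) :=
  (l2_opNorm_sq_le_iff (sq_nonneg ‖A‖)).mp le_rfl v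

lemma l2_opNorm_transpose [DecidableEq m] [DecidableEq n] (A : Matrix m n ℝ) : ‖Aᵀ‖ = ‖A‖ := by
  rw [← conjTranspose_eq_transpose_of_trivial, l2_opNorm_conjTranspose]

lemma l2_opNorm_mul_transpose_le [DecidableEq n] [DecidableEq k]
    (X : Matrix m k ℝ) {V : Matrix n k ℝ} (hV : Vᵀ * V = 1) : ‖X * Vᵀ‖ ≤ ‖X‖ :=
  calc ‖X * Vᵀ‖ ≤ ‖X‖ * ‖Vᵀ‖ := l2_opNorm_mul X Vᵀ
    _ ≤ ‖X‖ * 1 := by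
      gcongr; rw [l2_opNorm_transpose]; exact l2_opNorm_le_one_of_transpose_mul_self hV
    _ = ‖X‖ := mul_one _

lemma le_transpose_mulVec_dotProduct_self [DecidableEq k] {B : Matrix k k ℝ} {β : ℝ}
    (hβ : 0 < β) (h : ∀ d, β * (d ⬝ᵥ d) ≤ B *ᵥ d ⬝ᵥ B *ᵥ d) (c : k → ℝ) :
    β * (c ⬝ᵥ c) ≤ Bᵀ *ᵥ c ⬝ᵥ Bᵀ *ᵥ c := by
  have hB : IsUnit B := by
    refine mulVec_injective_iff_isUnit.mp fun d₁ d₂ hd => sub_eq_zero.mp ?_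
    have := h (d₁ - d₂)
    rw [mulVec_sub, hd, sub_self, zero_dotProduct] at this
    exact dotProduct_self_eq_zero.mp (le_antisymm (nonpos_of_mul_nonpos_right this hβ)
      (dotProduct_self_star_nonneg _))
  have hBinv : ‖B⁻¹‖ ^ 2 ≤ β⁻¹ := (l2_opNorm_sq_le_iff (inv_nonneg.mpr hβ.le)).mpr fun w => by
    have := h (B⁻¹ *ᵥ w)
    rw [mulVec_mulVec, mul_nonsing_inv _ ((isUnit_iff_isUnit_det B).mp hB), one_mulVec] at this
    rw [inv_mul_eq_div, le_div_iff₀ hβ]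
    linarith
  have hc : c = (B⁻¹)ᵀ *ᵥ (Bᵀ *ᵥ c) := by
    rw [mulVec_mulVec, ← transpose_mul, mul_nonsing_inv _ ((isUnit_iff_isUnit_det B).mp hB),
      transpose_one, one_mulVec]
  calc β * (c ⬝ᵥ c) ≤ β * (‖B⁻¹‖ ^ 2 * (Bᵀ *ᵥ c ⬝ᵥ Bᵀ *ᵥ c)) := by
        gcongr
        conv_lhs => rw [hc]
        rw [← l2_opNorm_transpose]
        exact mulVec_dotProduct_mulVec_self_le _ _
    _ ≤ β * (β⁻¹ * (Bᵀ *ᵥ c ⬝ᵥ Bᵀ *ᵥ c)) := by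
        gcongr
        exact dotProduct_self_star_nonneg _
    _ = Bᵀ *ᵥ c ⬝ᵥ Bᵀ *ᵥ c := by field_simp

lemma one_sub_mul_transpose_mul_mulVec_dotProduct_self {l : Type*} [Fintype l] [DecidableEq n]
    [DecidableEq k] [DecidableEq l] {V : Matrix n k ℝ} {U : Matrix n l ℝ} (hV : Vᵀ * V = 1)
    (hU : Uᵀ * U = 1) (d : l → ℝ) :
    ((1 - V * Vᵀ) * U) *ᵥ d ⬝ᵥ ((1 - V * Vᵀ) * U) *ᵥ d =
      d ⬝ᵥ d - (Vᵀ * U) *ᵥ d ⬝ᵥ (Vᵀ * U) *ᵥ d := by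
  have h := (isStarProjection_mul_transpose hV).mulVec_dotProduct_self_add_one_sub_mulVec (U *ᵥ d)
  have hP : (V * Vᵀ) *ᵥ U *ᵥ d = V *ᵥ (Vᵀ * U) *ᵥ d := by
    simp only [mulVec_mulVec, Matrix.mul_assoc]
  rw [hP, mulVec_dotProduct_mulVec_self_of_transpose_mul_self hV,
    mulVec_dotProduct_mulVec_self_of_transpose_mul_self hU, mulVec_mulVec] at h
  linarith

lemma l2_opNorm_one_sub_mul_transpose_mul_sq_le_iff {l : Type*} [Fintype l] [DecidableEq n]
    [DecidableEq k] [DecidableEq l] {V : Matrix n k ℝ} {U : Matrix n l ℝ} (hV : Vᵀ * V = 1)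
    (hU : Uᵀ * U = 1) {c : ℝ} (hc : 0 ≤ c) :
    ‖(1 - V * Vᵀ) * U‖ ^ 2 ≤ c ↔ ∀ d, (1 - c) * (d ⬝ᵥ d) ≤ (Vᵀ * U) *ᵥ d ⬝ᵥ (Vᵀ * U) *ᵥ d := by
  rw [l2_opNorm_sq_le_iff hc]
  refine forall_congr' fun d => ?_
  rw [one_sub_mul_transpose_mul_mulVec_dotProduct_self hV hU]
  constructor <;> intro h <;> linarith

lemma _root_.IsStarProjection.l2_opNorm_sub_le [DecidableEq n] {P Q : Matrix n n ℝ}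
    (hP : IsStarProjection P) (hQ : IsStarProjection Q) {b : ℝ} (h₁ : ‖P * (1 - Q)‖ ≤ b)
    (h₂ : ‖(1 - P) * Q‖ ≤ b) : ‖P - Q‖ ≤ b := by
  have hb : 0 ≤ b := (norm_nonneg _).trans h₁
  rw [← norm_neg] at h₂
  rw [l2_opNorm_le_iff hb] at h₁ h₂ ⊢
  intro v
  have hsplit :
      (P - Q) *ᵥ v = (P * (1 - Q)) *ᵥ ((1 - Q) *ᵥ v) + (-((1 - P) * Q)) *ᵥ (Q *ᵥ v) := by
    rw [mulVec_mulVec, mulVec_mulVec, ← add_mulVec, Matrix.mul_assoc, Matrix.neg_mul,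
      Matrix.mul_assoc, hQ.one_sub.isIdempotentElem.eq, hQ.isIdempotentElem.eq]
    noncomm_ring
  have horth : (P * (1 - Q))ᵀ * -((1 - P) * Q) = 0 := by
    rw [transpose_mul, hP.matrix_transpose_eq, hQ.one_sub.matrix_transpose_eq, Matrix.mul_neg,
      Matrix.mul_assoc, ← Matrix.mul_assoc P, hP.mul_one_sub_self, Matrix.zero_mul,
      Matrix.mul_zero, neg_zero]
  rw [hsplit,
    dotProduct_add_self_of_dotProduct_eq_zero (mulVec_dotProduct_mulVec_eq_zero horth _ _),
    ← hQ.mulVec_dotProduct_self_add_one_sub_mulVec v]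
  linarith [h₁ ((1 - Q) *ᵥ v), h₂ (Q *ᵥ v)]

theorem l2_opNorm_mul_transpose_sub_le [DecidableEq n] [DecidableEq k] {V U : Matrix n k ℝ}
    (hV : Vᵀ * V = 1) (hU : Uᵀ * U = 1) {b : ℝ} (hb : ‖(1 - V * Vᵀ) * U‖ ≤ b) (hb1 : b < 1) :
    ‖V * Vᵀ - U * Uᵀ‖ ≤ b := by
  have hb0 : 0 ≤ b := (norm_nonneg _).trans hb
  have hVU := (l2_opNorm_one_sub_mul_transpose_mul_sq_le_iff hV hU (sq_nonneg b)).mp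
    (pow_le_pow_left₀ (norm_nonneg _) hb 2)
  have hUV : ‖(1 - U * Uᵀ) * V‖ ≤ b := by
    rw [← sq_le_sq₀ (norm_nonneg _) hb0,
      l2_opNorm_one_sub_mul_transpose_mul_sq_le_iff hU hV (sq_nonneg b)]
    intro c
    simpa only [transpose_mul, transpose_transpose] using
      le_transpose_mulVec_dotProduct_self (by nlinarith) hVU c
  have hP := isStarProjection_mul_transpose hV
  have hQ := isStarProjection_mul_transpose hU
  refine hP.l2_opNorm_sub_le hQ ?_ ?_
  · have : V * Vᵀ * (1 - U * Uᵀ) = ((1 - U * Uᵀ) * V * Vᵀ)ᵀ := by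
      rw [transpose_mul, transpose_mul, hQ.one_sub.matrix_transpose_eq, transpose_transpose,
        Matrix.mul_assoc]
    rw [this, l2_opNorm_transpose]
    exact (l2_opNorm_mul_transpose_le _ hV).trans hUV
  · rw [← Matrix.mul_assoc]
    exact (l2_opNorm_mul_transpose_le _ hU).trans hb

lemma l2_opNorm_le_div_of_mul_diagonal_eq [DecidableEq k] {Y R : Matrix m k ℝ} {μ : k → ℝ}
    {c : ℝ} (hc : 0 < c) (hμ : ∀ i, c ≤ μ i) (h : Y * diagonal μ = R) : ‖Y‖ ≤ ‖R‖ / c := by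
  have hY : Y = R * diagonal μ⁻¹ := by
    have hμ0 : ∀ i, μ i ≠ 0 := fun i => (hc.trans_le (hμ i)).ne'
    simp [← h, Matrix.mul_assoc, hμ0]
  calc ‖Y‖ ≤ ‖R‖ * ‖diagonal μ⁻¹‖ := hY ▸ l2_opNorm_mul _ _
    _ ≤ ‖R‖ * c⁻¹ := by
      gcongr
      rw [l2_opNorm_diagonal]
      refine (pi_norm_le_iff_of_nonneg (by positivity)).mpr fun i => ?_
      rw [Pi.inv_apply, norm_inv, Real.norm_of_nonneg (hc.le.trans (hμ i))]
      exact inv_anti₀ hc (hμ i)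
    _ = ‖R‖ / c := (div_eq_mul_inv _ _).symm

lemma mul_transpose_mul_eq_of_range_le [DecidableEq k] {V : Matrix n k ℝ} {A : Matrix n m ℝ}
    (hV : Vᵀ * V = 1) (h : LinearMap.range A.mulVecLin ≤ LinearMap.range V.mulVecLin) :
    V * Vᵀ * A = A := by
  refine ext_iff_mulVec.mpr fun x => ?_
  obtain ⟨w, hw⟩ := h ⟨x, rfl⟩
  simp only [mulVecLin_apply] at hw
  rw [← mulVec_mulVec, ← hw, mulVec_mulVec, Matrix.mul_assoc, hV, Matrix.mul_one]

end Matrix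

/-- Davis–Kahan-type bound: if `S = S₁ + S₂` with `S₁` symmetric PSD of rank `γ`,
`V₁` an orthonormal basis of the range of `S₁`, `U₁` an orthonormal basis of the top-`γ`
eigenspace of `S`, and `λ_γ(S₁) > 2‖S₂‖₂`, then
`‖V₁V₁ᵀ − U₁U₁ᵀ‖₂ ≤ ‖S₂‖₂ / (λ_γ(S₁) − 2‖S₂‖₂)`. -/
theorem davis_kahan_projection_bound {N γ : ℕ} (hγ : γ < N)
    (S₁ S₂ : Matrix (Fin N) (Fin N) ℝ)
    (h1 : S₁.IsHermitian) (hS : (S₁ + S₂).IsHermitian)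
    (V₁ U₁ : Matrix (Fin N) (Fin γ) ℝ)
    (hV₁o : V₁ᵀ * V₁ = 1) (hU₁o : U₁ᵀ * U₁ = 1)
    (hV : LinearMap.range V₁.mulVecLin = LinearMap.range S₁.mulVecLin)
    (μ : Fin γ → ℝ)
    (hU : (S₁ + S₂) * U₁ = U₁ * Matrix.diagonal μ)
    (hμ : ∀ i : Fin γ, μ i = eigDesc hS.eigenvalues (Fin.castLE hγ.le i))
    (hgap : 2 * ‖S₂‖ < eigDesc h1.eigenvalues ⟨γ - 1, by omega⟩) :
    ‖V₁ * V₁ᵀ - U₁ * U₁ᵀ‖ ≤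
      ‖S₂‖ / (eigDesc h1.eigenvalues ⟨γ - 1, by omega⟩ - 2 * ‖S₂‖) := by
  set lam := eigDesc h1.eigenvalues ⟨γ - 1, by omega⟩
  set P := V₁ * V₁ᵀ
  have hε : 0 ≤ ‖S₂‖ := norm_nonneg _
  have hμ_ge (i : Fin γ) : lam - ‖S₂‖ ≤ μ i := by
    rw [hμ i]
    refine (h1.eigDesc_sub_norm_le hS _).trans (eigDesc_antitone _ ?_)
    simp only [Fin.le_def, Fin.val_castLE]
    omega
  have hS₁ : (1 - P) * S₁ = 0 := by
    rw [Matrix.sub_mul, Matrix.one_mul, mul_transpose_mul_eq_of_range_le hV₁o hV.ge, sub_self]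
  have hY : (1 - P) * U₁ * diagonal μ = (1 - P) * S₂ * U₁ := by
    rw [Matrix.mul_assoc, ← hU, ← Matrix.mul_assoc, Matrix.mul_add, hS₁, zero_add]
  have hR : ‖(1 - P) * S₂ * U₁‖ ≤ ‖S₂‖ :=
    calc ‖(1 - P) * S₂ * U₁‖ ≤ ‖1 - P‖ * ‖S₂‖ * ‖U₁‖ :=
          (l2_opNorm_mul _ _).trans (by gcongr; exact l2_opNorm_mul _ _)
      _ ≤ 1 * ‖S₂‖ * 1 := by
          gcongr
          · exact (isStarProjection_mul_transpose hV₁o).one_sub.norm_le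
          · exact l2_opNorm_le_one_of_transpose_mul_self hU₁o
      _ = ‖S₂‖ := by ring
  have hPU := l2_opNorm_le_div_of_mul_diagonal_eq (by linarith) hμ_ge hY
  calc ‖P - U₁ * U₁ᵀ‖ ≤ ‖S₂‖ / (lam - ‖S₂‖) :=
        l2_opNorm_mul_transpose_sub_le hV₁o hU₁o
          (hPU.trans (div_le_div_of_nonneg_right hR (by linarith)))
          ((div_lt_one (by linarith)).mpr (by linarith))
    _ ≤ ‖S₂‖ / (lam - 2 * ‖S₂‖) := by gcongr; linarith
end
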